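/- If in some (θ₁, …, θ_k)-representation of K_{n×3} the nonedges are colored with at most m colors, then n ≤ m + C(m,3). In particular, if K_{n×3} is a k-threshold graph, then n ≤ ⌈(k+1)/2⌉ + C(⌈(k+1)/2⌉, 3). -/

import Mathlib

open Finset

/-- The disjoint union of `n` copies of the complete graph `K_m`,
on vertex set `Fin n × Fin m`. -/
def copiesK (n m : ℕ) : SimpleGraph (Fin n × Fin m) where
  Adj x y := x.1 = y.1 ∧ x ≠ y
  symm := ⟨fun x y h => ⟨h.1.symm, h.2.symm⟩⟩
  loopless := ⟨fun x h => h.2 rfl⟩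

/-- The complete `n`-partite graph with `m` vertices in each part,
on vertex set `Fin n × Fin m`. -/
def completeMulti (n m : ℕ) : SimpleGraph (Fin n × Fin m) where
  Adj x y := x.1 ≠ y.1
  symm := ⟨fun x y h => h.symm⟩
  loopless := ⟨fun x h => h rfl⟩

/-- `r` together with the strictly increasing thresholds `θ₁ < ⋯ < θ_k` is a
`(θ₁, …, θ_k)`-representation of `G`: for distinct `u v`, `uv` is an edge iff the
number of thresholds not exceeding `r u + r v` is odd. -/
def IsRep {V : Type*} {k : ℕ} (G : SimpleGraph V) (θ : Fin k → ℝ) (r : V → ℝ) : Prop :=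
  StrictMono θ ∧ ∀ u v : V, u ≠ v →
    (G.Adj u v ↔ Odd (Finset.univ.filter (fun i => θ i ≤ r u + r v)).card)

/-- `G` is a `k`-threshold graph. -/
def IsKThreshold {V : Type*} (G : SimpleGraph V) (k : ℕ) : Prop :=
  ∃ (θ : Fin k → ℝ) (r : V → ℝ), IsRep G θ r

/-- The threshold number `Θ(G)`: the least `k` for which `G` is a `k`-threshold graph. -/
noncomputable def thresholdNumber {V : Type*} (G : SimpleGraph V) : ℕ :=
  sInf {k | IsKThreshold G k}

/-- The 1-based color of an edge with rank sum `s`: it equals `i` exactly when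
`s ∈ [θ_{2i-1}, θ_{2i})` (1-based indexing, with `θ_{k+1} = ∞`), i.e. when the number
of thresholds not exceeding `s` equals `2i - 1`. -/
noncomputable def edgeColor {k : ℕ} (θ : Fin k → ℝ) (s : ℝ) : ℕ :=
  ((Finset.univ.filter (fun i => θ i ≤ s)).card + 1) / 2

/-- The 1-based color of a nonedge with rank sum `s`: it equals `i` exactly when
`s ∈ [θ_{2i-2}, θ_{2i-1})` (1-based indexing, with `θ₀ = -∞`), i.e. when the number
of thresholds not exceeding `s` equals `2i - 2`. -/
noncomputable def nonedgeColor {k : ℕ} (θ : Fin k → ℝ) (s : ℝ) : ℕ :=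
  (Finset.univ.filter (fun i => θ i ≤ s)).card / 2 + 1

/-- The multiset of colors on the three edges of the `t`-th triangle of `nK₃`. -/
noncomputable def triColors3 {n k : ℕ} (θ : Fin k → ℝ) (r : Fin n × Fin 3 → ℝ) (t : Fin n) :
    Multiset ℕ :=
  {edgeColor θ (r (t, 0) + r (t, 1)), edgeColor θ (r (t, 0) + r (t, 2)),
    edgeColor θ (r (t, 1) + r (t, 2))}

/-- The multiset of colors on the three nonedges of the `t`-th part of `K_{n×3}`. -/
noncomputable def partColors3 {n k : ℕ} (θ : Fin k → ℝ) (r : Fin n × Fin 3 → ℝ) (t : Fin n) :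
    Multiset ℕ :=
  {nonedgeColor θ (r (t, 0) + r (t, 1)), nonedgeColor θ (r (t, 0) + r (t, 2)),
    nonedgeColor θ (r (t, 1) + r (t, 2))}

/-!
Let `F s` count the thresholds `≤ s`. Then `F` is monotone, rank sums inside a part have
even `F` and rank sums across parts have odd `F`. If nonedges `{a, a'}` and `{b, b'}` of
different parts have the same `F`, the odd value `F (a + b')` forces `a + b'` below or above
both sums, so one pair lies strictly inside the other; and `F` is constant between two points
where it takes the same value. Together these show that a part with sorted ranks is determined
by the following code: the bottom color if its top two nonedge colors agree, the top color if
its bottom two agree, and its set of three colors otherwise. There are at most `m + C(m,3)` codes.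
-/

def tripleCode (x y z : ℕ) : ℕ ⊕ Finset ℕ :=
  if y = z then .inl x else if x = y then .inl z else .inr {x, y, z}

theorem tripleCode_mem {S : Finset ℕ} {x y z : ℕ} (hxy : x ≤ y) (hyz : y ≤ z)
    (hx : x ∈ S) (hy : y ∈ S) (hz : z ∈ S) : tripleCode x y z ∈ S.disjSum (S.powersetCard 3) := by
  unfold tripleCode
  split_ifs
  · exact inl_mem_disjSum.2 hx
  · exact inl_mem_disjSum.2 hz
  · refine inr_mem_disjSum.2 (mem_powersetCard.2 ⟨?_, card_eq_three.2 ⟨x, y, z, ?_, ?_, ?_, rfl⟩⟩)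
    · intro w hw
      simp only [mem_insert, mem_singleton] at hw
      rcases hw with rfl | rfl | rfl <;> assumption
    all_goals omega

theorem tripleCode_eq_tripleCode {x y z x' y' z' : ℕ} (hxy : x ≤ y) (hyz : y ≤ z)
    (hxy' : x' ≤ y') (hyz' : y' ≤ z') (h : tripleCode x y z = tripleCode x' y' z') :
    (y = z ∧ y' = z' ∧ x = x') ∨ (y = z ∧ x' = y' ∧ x = z') ∨ (x = y ∧ y' = z' ∧ z = x') ∨
      (x = y ∧ x' = y' ∧ z = z') ∨ (x = x' ∧ y = y' ∧ z = z') := by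
  unfold tripleCode at h
  split_ifs at h <;> simp only [Sum.inl.injEq, Sum.inr.injEq] at h
  all_goals try omega
  have hm := fun w => (Finset.ext_iff.mp h w)
  simp only [mem_insert, mem_singleton] at hm
  have := hm x; have := hm y; have := hm z; have := hm x'; have := hm y'; have := hm z'
  simp only [true_or, or_true, iff_true, true_iff] at *
  omega

def partCode (F : ℝ → ℕ) (a : Fin 3 → ℝ) : ℕ ⊕ Finset ℕ :=
  tripleCode (F (a 0 + a 1)) (F (a 0 + a 2)) (F (a 1 + a 2))

section Levels

variable {F : ℝ → ℕ}

theorem nested_of_eq_of_odd (hF : Monotone F) {a a' b b' : ℝ} (h : F (a + a') = F (b + b'))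
    (he : Even (F (a + a'))) (ho : Odd (F (a + b'))) :
    (a < b ∧ b' < a') ∨ (b < a ∧ a' < b') := by
  have hne : F (a + b') ≠ F (a + a') := fun h' => Nat.not_even_iff_odd.2 ho (h' ▸ he)
  rcases hne.lt_or_gt with hlt | hlt
  · have := hF.reflect_lt hlt
    have := hF.reflect_lt (h ▸ hlt)
    left; constructor <;> linarith
  · have := hF.reflect_lt hlt
    have := hF.reflect_lt (h ▸ hlt)
    right; constructor <;> linarith

theorem not_odd_of_between (hF : Monotone F) {x y z : ℝ} (h : F x = F z) (he : Even (F x))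
    (hxy : x ≤ y) (hyz : y ≤ z) : ¬Odd (F y) := by
  rw [Nat.not_odd_iff_even, le_antisymm (h ▸ hF hyz) (hF hxy)]
  exact he

theorem partCode_ne (hF : Monotone F) {a b : Fin 3 → ℝ} (ha : Monotone a) (hb : Monotone b)
    (haE : ∀ i j, i ≠ j → Even (F (a i + a j))) (hbE : ∀ i j, i ≠ j → Even (F (b i + b j)))
    (hab : ∀ i j, Odd (F (a i + b j))) : partCode F a ≠ partCode F b := by
  have ha01 : a 0 ≤ a 1 := ha (by decide)
  have ha12 : a 1 ≤ a 2 := ha (by decide)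
  have hb01 : b 0 ≤ b 1 := hb (by decide)
  have hb12 : b 1 ≤ b 2 := hb (by decide)
  have nested : ∀ {i j k l : Fin 3}, i ≠ j → F (a i + a j) = F (b k + b l) →
      (a i < b k ∧ b l < a j) ∨ (b k < a i ∧ a j < b l) :=
    fun hij h => nested_of_eq_of_odd hF h (haE _ _ hij) (hab _ _)
  intro h
  rcases tripleCode_eq_tripleCode (hF (by linarith)) (hF (by linarith)) (hF (by linarith))
    (hF (by linarith)) h with ⟨hA, hB, h₀⟩ | ⟨hA, hB, h₀⟩ | ⟨hA, hB, h₀⟩ | ⟨hA, hB, h₀⟩ |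
    ⟨h₀, h₁, h₂⟩
  · rcases nested (by decide) h₀ with ⟨_, _⟩ | ⟨_, _⟩
    · exact not_odd_of_between hF hA (haE 0 2 (by decide)) (by linarith) (by linarith) (hab 2 0)
    · exact not_odd_of_between hF hB (hbE 0 2 (by decide)) (by linarith) (by linarith) (hab 0 2)
  · rcases nested (by decide) h₀ with ⟨_, _⟩ | ⟨_, _⟩
    · exact not_odd_of_between hF hA (haE 0 2 (by decide)) (by linarith) (by linarith) (hab 2 1)
    · exact not_odd_of_between hF hB (hbE 0 1 (by decide)) (by linarith) (by linarith) (hab 0 0)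
  · rcases nested (by decide) h₀ with ⟨_, _⟩ | ⟨_, _⟩
    · exact not_odd_of_between hF hA (haE 0 1 (by decide)) (by linarith) (by linarith) (hab 0 1)
    · exact not_odd_of_between hF hB (hbE 0 2 (by decide)) (by linarith) (by linarith) (hab 1 2)
  · rcases nested (by decide) h₀ with ⟨_, _⟩ | ⟨_, _⟩
    · exact not_odd_of_between hF hA (haE 0 1 (by decide)) (by linarith) (by linarith) (hab 0 1)
    · exact not_odd_of_between hF hB (hbE 0 1 (by decide)) (by linarith) (by linarith) (hab 1 0)
  · rcases nested (by decide) h₀ with ⟨_, _⟩ | ⟨_, _⟩ <;>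
      rcases nested (by decide) h₁ with ⟨_, _⟩ | ⟨_, _⟩ <;>
      rcases nested (by decide) h₂ with ⟨_, _⟩ | ⟨_, _⟩ <;> linarith

theorem card_le_add_choose_of_parts {ι : Type*} [Fintype ι] (hF : Monotone F)
    (x : ι → Fin 3 → ℝ) (hx : ∀ t, Monotone (x t))
    (hinner : ∀ t i j, i ≠ j → Even (F (x t i + x t j)))
    (hcross : ∀ s t, s ≠ t → ∀ i j, Odd (F (x s i + x t j)))
    (S : Finset ℕ) (hS : ∀ t i j, i ≠ j → F (x t i + x t j) ∈ S) :
    Fintype.card ι ≤ #S + (#S).choose 3 := by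
  have hmaps : ∀ t ∈ (univ : Finset ι), partCode F (x t) ∈ S.disjSum (S.powersetCard 3) :=
    fun t _ => tripleCode_mem (hF (by linarith [hx t (show (1 : Fin 3) ≤ 2 by decide)]))
      (hF (by linarith [hx t (show (0 : Fin 3) ≤ 1 by decide)]))
      (hS t 0 1 (by decide)) (hS t 0 2 (by decide)) (hS t 1 2 (by decide))
  have hinj : Set.InjOn (fun t => partCode F (x t)) (univ : Finset ι) := by
    intro s _ t _ hst
    by_contra hne
    exact partCode_ne hF (hx s) (hx t) (hinner s) (hinner t) (hcross s t hne) hst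
  simpa [card_disjSum, card_powersetCard] using card_le_card_of_injOn _ hmaps hinj

end Levels

noncomputable def thresholdCount {k : ℕ} (θ : Fin k → ℝ) (s : ℝ) : ℕ :=
  #{i | θ i ≤ s}

theorem thresholdCount_mono {k : ℕ} (θ : Fin k → ℝ) : Monotone (thresholdCount θ) :=
  fun _ _ hst => card_le_card fun i hi => by
    simp only [mem_filter, mem_univ, true_and] at hi ⊢
    exact hi.trans hst

theorem nonedgeColor_eq {k : ℕ} (θ : Fin k → ℝ) (s : ℝ) :
    nonedgeColor θ s = thresholdCount θ s / 2 + 1 :=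
  rfl

theorem nonedgeColor_mem_Icc {k : ℕ} (θ : Fin k → ℝ) (s : ℝ) :
    nonedgeColor θ s ∈ Icc 1 ((k + 2) / 2) := by
  have : thresholdCount θ s ≤ k := (card_filter_le _ _).trans_eq (card_fin k)
  rw [nonedgeColor_eq, mem_Icc]
  omega

theorem IsRep.le_add_choose_of_nonedgeColor_mem {n k : ℕ} {θ : Fin k → ℝ}
    {r : Fin n × Fin 3 → ℝ} (h : IsRep (completeMulti n 3) θ r) (C : Finset ℕ)
    (hC : ∀ t a b, a ≠ b → nonedgeColor θ (r (t, a) + r (t, b)) ∈ C) :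
    n ≤ #C + (#C).choose 3 := by
  set σ : Fin n → Equiv.Perm (Fin 3) := fun t => Tuple.sort fun a => r (t, a)
  have hinner : ∀ t i j, i ≠ j → Even (thresholdCount θ (r (t, σ t i) + r (t, σ t j))) :=
    fun t i j hij => Nat.not_odd_iff_even.1 fun hodd =>
      ((h.2 _ _ (by simpa using (σ t).injective.ne hij)).2 hodd) rfl
  have hcross : ∀ s t, s ≠ t → ∀ i j, Odd (thresholdCount θ (r (s, σ s i) + r (t, σ t j))) :=
    fun s t hst i j => (h.2 _ _ fun he => hst (congrArg Prod.fst he)).1 hst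
  have hS : ∀ t i j, i ≠ j → thresholdCount θ (r (t, σ t i) + r (t, σ t j)) ∈
      C.image fun c => 2 * (c - 1) := by
    intro t i j hij
    obtain ⟨q, hq⟩ := hinner t i j hij
    exact mem_image.2 ⟨_, hC t _ _ ((σ t).injective.ne hij), by
      rw [nonedgeColor_eq]; omega⟩
  have hcard := card_le_add_choose_of_parts (thresholdCount_mono θ)
    (fun t => (fun a => r (t, a)) ∘ σ t) (fun t => Tuple.monotone_sort _) hinner hcross _ hS
  rw [Fintype.card_fin] at hcard
  exact hcard.trans (add_le_add card_image_le (Nat.choose_le_choose 3 card_image_le))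

/-- If in some representation of `K_{n×3}` the nonedges are colored with at most `m`
colors, then `n ≤ m + C(m,3)`; in particular, if `K_{n×3}` is a `k`-threshold graph
then `n ≤ ⌈(k+1)/2⌉ + C(⌈(k+1)/2⌉, 3)`. -/
theorem stmt10 :
    (∀ (n k m : ℕ) (θ : Fin k → ℝ) (r : Fin n × Fin 3 → ℝ),
      IsRep (completeMulti n 3) θ r →
      (∃ C : Finset ℕ, C.card ≤ m ∧
        ∀ (t : Fin n) (a b : Fin 3), a ≠ b → nonedgeColor θ (r (t, a) + r (t, b)) ∈ C) →
      n ≤ m + Nat.choose m 3) ∧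
    (∀ n k : ℕ, IsKThreshold (completeMulti n 3) k →
      n ≤ (k + 2) / 2 + Nat.choose ((k + 2) / 2) 3) := by
  refine ⟨fun n k m θ r h ⟨C, hCm, hC⟩ => ?_, fun n k ⟨θ, r, h⟩ => ?_⟩
  · exact (h.le_add_choose_of_nonedgeColor_mem C hC).trans
      (add_le_add hCm (Nat.choose_le_choose 3 hCm))
  · simpa using h.le_add_choose_of_nonedgeColor_mem _ fun _ _ _ _ => nonedgeColor_mem_Icc θ _
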